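/- arXiv:2303.16981 — 5 statements merged into one kernel-verified Lean document; each statement's English description precedes it below -/
import Mathlib

section
/- Let X, X_1, ..., X_{N_s} be real-valued random variables on a probability space that are independent and identically distributed, with N_s ≥ 2. Let X̂ = (1/N_s)·Σ_{i=1}^{N_s} X_i be the sample mean and σ̂ = √((1/N_s)·Σ_{i=1}^{N_s}(X_i − X̂)²) the sample standard deviation, and assume σ̂ > 0 almost surely. Then for every λ > 0, P(X − X̂ ≥ λ·σ̂) ≤ (√(N_s+1) + λ)² / (λ²·N_s + (√(N_s+1) + λ)²). -/
/-!
Write `V = (X, X₁, …, X_{Ns})` and call index `j` an outlier of `V` if `V j` exceeds the mean of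
the other `Ns` coordinates by at least `λ` times their (positive) standard deviation; the event
of the theorem is "index `0` is an outlier". Since `V` is i.i.d., it is exchangeable, so every
index is an outlier with the same probability `p`, and `(Ns + 1) p` is the expected number of
outliers. That number is bounded deterministically: in terms of the deviations `dⱼ` of the
coordinates from the mean of all of `V`, an outlier satisfies `dⱼ ≥ b` for a threshold `b`
proportional to the root of `S = ∑ dⱼ²`, and since `∑ dⱼ = 0` at most
`(Ns + 1) S / (S + (Ns + 1) b²)` of the `dⱼ` can reach `b` (a counting form of Cantelli's
inequality). This gives `p ≤ A / (λ² Ns + A)` with `A = Ns + 1 + λ² ≤ (√(Ns + 1) + λ)²`.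
-/

open MeasureTheory ProbabilityTheory Real

open Finset
open scoped ENNReal

lemma sum_sub_sq {ι : Type*} (s : Finset ι) (v : ι → ℝ) (c : ℝ) :
    ∑ i ∈ s, (v i - c) ^ 2 = ∑ i ∈ s, v i ^ 2 - 2 * c * ∑ i ∈ s, v i + #s * c ^ 2 := by
  simp only [sub_sq, sum_add_distrib, sum_sub_distrib, sum_const, nsmul_eq_mul, ← sum_mul,
    ← mul_sum]
  ring

section SampleStatistics

variable {n : ℕ}

noncomputable def sampleMean (w : Fin n → ℝ) : ℝ := (1 / (n : ℝ)) * ∑ i, w i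

noncomputable def sampleStd (w : Fin n → ℝ) : ℝ :=
  √((1 / (n : ℝ)) * ∑ i, (w i - sampleMean w) ^ 2)

lemma ne_zero_of_sampleStd_pos {w : Fin n → ℝ} (h : 0 < sampleStd w) : n ≠ 0 := by
  rintro rfl
  simp [sampleStd] at h

lemma sum_removeNth (j : Fin (n + 1)) (v : Fin (n + 1) → ℝ) :
    ∑ i, j.removeNth v i = ∑ i, v i - v j := by
  rw [Fin.sum_univ_succAbove v j]
  simp [Fin.removeNth]

lemma sampleMean_removeNth (j : Fin (n + 1)) (v : Fin (n + 1) → ℝ) :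
    sampleMean (j.removeNth v) = (∑ i, v i - v j) / n := by
  rw [sampleMean, sum_removeNth]
  ring

lemma sampleStd_removeNth (j : Fin (n + 1)) (v : Fin (n + 1) → ℝ) :
    sampleStd (j.removeNth v) = √((∑ i, (v i - sampleMean (j.removeNth v)) ^ 2
      - (v j - sampleMean (j.removeNth v)) ^ 2) / n) := by
  rw [sampleStd, ← sum_removeNth j (fun i => (v i - sampleMean (j.removeNth v)) ^ 2)]
  simp only [Fin.removeNth, one_div, inv_mul_eq_div]

lemma sampleMean_removeNth_comp (σ : Equiv.Perm (Fin (n + 1))) (k : Fin (n + 1))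
    (v : Fin (n + 1) → ℝ) : sampleMean (k.removeNth (v ∘ σ)) = sampleMean ((σ k).removeNth v) := by
  simp only [sampleMean_removeNth, Function.comp_apply, Equiv.sum_comp σ v]

lemma sampleStd_removeNth_comp (σ : Equiv.Perm (Fin (n + 1))) (k : Fin (n + 1))
    (v : Fin (n + 1) → ℝ) : sampleStd (k.removeNth (v ∘ σ)) = sampleStd ((σ k).removeNth v) := by
  simp only [sampleStd_removeNth, sampleMean_removeNth_comp, Function.comp_apply]
  rw [Equiv.sum_comp σ (fun i => (v i - sampleMean ((σ k).removeNth v)) ^ 2)]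

lemma sub_sampleMean_removeNth (hn : n ≠ 0) (j : Fin (n + 1)) (v : Fin (n + 1) → ℝ) :
    v j - sampleMean (j.removeNth v) = (n + 1) / n * (v j - sampleMean v) := by
  rw [sampleMean_removeNth, sampleMean]
  push_cast
  field_simp
  ring

lemma sq_mul_sampleStd_removeNth_sq (hn : n ≠ 0) (j : Fin (n + 1)) (v : Fin (n + 1) → ℝ) :
    (n : ℝ) ^ 2 * sampleStd (j.removeNth v) ^ 2
      = n * ∑ i, (v i - sampleMean v) ^ 2 - (n + 1) * (v j - sampleMean v) ^ 2 := by
  have hsq := sum_removeNth j (fun i => v i ^ 2)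
  simp only [Fin.removeNth] at hsq
  rw [sampleStd, sq_sqrt (by positivity), sum_sub_sq, sum_sub_sq, sampleMean_removeNth,
    sum_removeNth]
  simp only [Fin.removeNth, card_univ, Fintype.card_fin, hsq, sampleMean]
  push_cast
  field_simp
  ring

lemma sum_sub_sampleMean (w : Fin n → ℝ) : ∑ i, (w i - sampleMean w) = 0 := by
  rcases eq_or_ne n 0 with rfl | hn
  · simp
  rw [sum_sub_distrib, sum_const, card_univ, Fintype.card_fin, nsmul_eq_mul, sampleMean]
  field_simp
  ring

end SampleStatistics

lemma card_filter_mul_le_of_sum_eq_zero {ι : Type*} [Fintype ι] {w : ι → ℝ}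
    (hw : ∑ i, w i = 0) {b : ℝ} (hb : 0 < b) :
    (#{i | b ≤ w i} : ℝ) * (∑ i, w i ^ 2 + Fintype.card ι * b ^ 2)
      ≤ Fintype.card ι * ∑ i, w i ^ 2 := by
  set k : ℝ := ((#{i | b ≤ w i} : ℕ) : ℝ)
  set N : ℝ := ((Fintype.card ι : ℕ) : ℝ)
  set S := ∑ i, w i ^ 2
  have shifted (a : ℝ) (ha : 0 ≤ b + a) : k * (b + a) ^ 2 ≤ S + N * a ^ 2 := by
    have hsum : ∑ i, (w i + a) ^ 2 = S + N * a ^ 2 := by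
      simp only [add_sq, sum_add_distrib, ← sum_mul, ← mul_sum, hw, sum_const, card_univ,
        nsmul_eq_mul, S, N]
      ring
    calc k * (b + a) ^ 2 ≤ ∑ i ∈ {i | b ≤ w i}, (w i + a) ^ 2 := by
          rw [← nsmul_eq_mul]
          exact card_nsmul_le_sum _ _ _ fun i hi => by
            gcongr; exact (mem_filter.1 hi).2
      _ ≤ ∑ i, (w i + a) ^ 2 := sum_le_sum_of_subset_of_nonneg (subset_univ _)
          fun i _ _ => sq_nonneg _
      _ = S + N * a ^ 2 := hsum
  have hkN : k ≤ N := by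
    simp only [k, N, ← card_univ]; exact_mod_cast card_filter_le _ _
  have hS : 0 ≤ S := sum_nonneg fun i _ => sq_nonneg _
  have hN0 : 0 ≤ N := Nat.cast_nonneg _
  rcases hN0.eq_or_lt with hN | hN
  · have hk : k = 0 := le_antisymm (hN ▸ hkN) (Nat.cast_nonneg _)
    rw [hk, ← hN]; simp
  -- the optimal shift is `a = S / (N b)`
  set a := S / (N * b) with ha
  have hba : N * b * (b + a) = N * b ^ 2 + S := by rw [ha]; field_simp
  have hSa : (N * b) ^ 2 * (S + N * a ^ 2) = N * S * (N * b ^ 2 + S) := by rw [ha]; field_simp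
  have h : k * (N * b ^ 2 + S) * (N * b ^ 2 + S) ≤ N * S * (N * b ^ 2 + S) := by
    calc k * (N * b ^ 2 + S) * (N * b ^ 2 + S) = (N * b) ^ 2 * (k * (b + a) ^ 2) := by
          rw [← hba]; ring
      _ ≤ (N * b) ^ 2 * (S + N * a ^ 2) := by gcongr; exact shifted a (by positivity)
      _ = N * S * (N * b ^ 2 + S) := hSa
  rw [add_comm S]
  exact le_of_mul_le_mul_right h (by positivity)

section LeaveOneOut

variable {n : ℕ} {lam : ℝ}

def leaveOneOutTail (lam : ℝ) (j : Fin (n + 1)) : Set (Fin (n + 1) → ℝ) :=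
  {v | 0 < sampleStd (j.removeNth v) ∧
    lam * sampleStd (j.removeNth v) ≤ v j - sampleMean (j.removeNth v)}

lemma preimage_comp_leaveOneOutTail (σ : Equiv.Perm (Fin (n + 1))) (k : Fin (n + 1)) :
    (fun v => v ∘ σ) ⁻¹' leaveOneOutTail lam k = leaveOneOutTail lam (σ k) := by
  ext v
  simp only [leaveOneOutTail, Set.mem_preimage, Set.mem_ofPred_eq, sampleMean_removeNth_comp,
    sampleStd_removeNth_comp, Function.comp_apply]

@[fun_prop]
lemma measurable_sampleMean : Measurable (sampleMean : (Fin n → ℝ) → ℝ) := by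
  unfold sampleMean; fun_prop

@[fun_prop]
lemma measurable_sampleStd : Measurable (sampleStd : (Fin n → ℝ) → ℝ) := by
  unfold sampleStd; fun_prop

lemma measurableSet_leaveOneOutTail (lam : ℝ) (j : Fin (n + 1)) :
    MeasurableSet (leaveOneOutTail lam j) := by
  have hrem : Measurable (j.removeNth : (Fin (n + 1) → ℝ) → Fin n → ℝ) :=
    measurable_pi_lambda _ fun i => measurable_pi_apply _
  rw [leaveOneOutTail, Set.ofPred_and]
  exact (measurableSet_lt (by fun_prop) (by fun_prop)).inter
    (measurableSet_le (by fun_prop) (by fun_prop))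

lemma mul_sum_sq_le_of_mem_leaveOneOutTail (hlam : 0 < lam) {v : Fin (n + 1) → ℝ}
    {j : Fin (n + 1)} (hv : v ∈ leaveOneOutTail lam j) :
    0 < v j - sampleMean v ∧ lam ^ 2 * n * ∑ i, (v i - sampleMean v) ^ 2
      ≤ (n + 1) * (n + 1 + lam ^ 2) * (v j - sampleMean v) ^ 2 := by
  obtain ⟨hstd, hle⟩ := hv
  have hn := ne_zero_of_sampleStd_pos hstd
  have hn' : (0 : ℝ) < n := by positivity
  rw [sub_sampleMean_removeNth hn] at hle
  have hsq := sq_mul_sampleStd_removeNth_sq hn j v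
  set s := sampleStd (j.removeNth v)
  set d := v j - sampleMean v
  have hd : 0 < d := by
    have : 0 < (n + 1) / n * d := lt_of_lt_of_le (by positivity) hle
    exact pos_of_mul_pos_right this (by positivity)
  refine ⟨hd, ?_⟩
  have hle' : n * (lam * s) ≤ (n + 1) * d :=
    calc n * (lam * s) ≤ n * ((n + 1) / n * d) := by gcongr
      _ = (n + 1) * d := by field_simp
  have hle2 := pow_le_pow_left₀ (by positivity) hle' 2
  rw [mul_pow, mul_pow, mul_pow] at hle2
  nlinarith [hle2, hsq]

open scoped Classical in
lemma card_leaveOneOutTail_le (hlam : 0 < lam) (v : Fin (n + 1) → ℝ) :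
    (#{j | v ∈ leaveOneOutTail lam j} : ℝ)
      ≤ (n + 1) * (n + 1 + lam ^ 2) / (lam ^ 2 * n + (n + 1 + lam ^ 2)) := by
  set F : Finset (Fin (n + 1)) := {j | v ∈ leaveOneOutTail lam j}
  rcases F.eq_empty_or_nonempty with hF | ⟨j₀, hj₀⟩
  · rw [hF, card_empty, Nat.cast_zero]; positivity
  have hv₀ := (mem_filter.1 hj₀).2
  have hn : n ≠ 0 := ne_zero_of_sampleStd_pos hv₀.1
  set S := ∑ i, (v i - sampleMean v) ^ 2
  set A : ℝ := n + 1 + lam ^ 2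
  have hS : 0 < S := lt_of_lt_of_le (pow_pos (mul_sum_sq_le_of_mem_leaveOneOutTail hlam hv₀).1 2)
    (single_le_sum (fun i _ => sq_nonneg (v i - sampleMean v)) (mem_univ j₀))
  set b := √(lam ^ 2 * n * S / ((n + 1) * A))
  have hb : 0 < b := sqrt_pos.2 (by positivity)
  have hFb : F ⊆ ({j | b ≤ v j - sampleMean v} : Finset _) := by
    intro j hj
    obtain ⟨hd, hle⟩ := mul_sum_sq_le_of_mem_leaveOneOutTail hlam (mem_filter.1 hj).2
    refine mem_filter.2 ⟨mem_univ _, sqrt_le_iff.2 ⟨hd.le, ?_⟩⟩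
    rw [div_le_iff₀ (by positivity)]
    linarith
  have hcount := card_filter_mul_le_of_sum_eq_zero (sum_sub_sampleMean v) hb
  simp only [Fintype.card_fin, Nat.cast_add, Nat.cast_one] at hcount
  have hb2 : (n + 1) * b ^ 2 = lam ^ 2 * n * S / A := by
    rw [sq_sqrt (by positivity)]; field_simp
  rw [hb2] at hcount
  have hFcard : (#F : ℝ) ≤ #{j | b ≤ v j - sampleMean v} := by exact_mod_cast card_le_card hFb
  rw [le_div_iff₀ (by positivity)]
  refine le_of_mul_le_mul_right ?_ hS
  have hA : (S + lam ^ 2 * n * S / A) * A = (lam ^ 2 * n + A) * S := by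
    have : A ≠ 0 := by positivity
    field_simp; ring
  calc (#F : ℝ) * (lam ^ 2 * n + A) * S
      ≤ #{j | b ≤ v j - sampleMean v} * ((lam ^ 2 * n + A) * S) := by
        rw [mul_assoc]; gcongr
    _ = #{j | b ≤ v j - sampleMean v} * (S + lam ^ 2 * n * S / A) * A := by rw [← hA]; ring
    _ ≤ (n + 1) * S * A := by gcongr
    _ = (n + 1) * A * S := by ring

end LeaveOneOut

lemma ProbabilityTheory.iIndepFun.identDistrib_comp_perm {Ω ι β : Type*} [MeasurableSpace Ω]
    [MeasurableSpace β] [Fintype ι] {μ : Measure Ω} {Y : ι → Ω → β}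
    (hY : ∀ i, AEMeasurable (Y i) μ) (hind : iIndepFun Y μ)
    (hident : ∀ i j, IdentDistrib (Y i) (Y j) μ μ) (σ : Equiv.Perm ι) :
    IdentDistrib (fun ω i => Y (σ i) ω) (fun ω i => Y i ω) μ μ where
  aemeasurable_fst := aemeasurable_pi_lambda _ fun i => hY (σ i)
  aemeasurable_snd := aemeasurable_pi_lambda _ hY
  map_eq := by
    rw [(hind.precomp σ.injective).map_fun_eq_pi_map (fun i => hY (σ i)),
      hind.map_fun_eq_pi_map hY]
    exact congrArg Measure.pi (funext fun i => (hident (σ i) i).map_eq)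

open scoped Classical in
lemma MeasureTheory.sum_measure_le_of_card_le {α ι : Type*} [MeasurableSpace α] [Fintype ι]
    {μ : Measure α} {A : ι → Set α} (hA : ∀ i, MeasurableSet (A i)) {K : ℝ≥0∞}
    (hK : ∀ᵐ x ∂μ, (#{i | x ∈ A i} : ℝ≥0∞) ≤ K) :
    ∑ i, μ (A i) ≤ K * μ Set.univ := by
  calc ∑ i, μ (A i) = ∑ i, ∫⁻ x, (A i).indicator 1 x ∂μ := by
        simp only [lintegral_indicator_one (hA _)]
    _ = ∫⁻ x, ∑ i, (A i).indicator 1 x ∂μ :=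
        (lintegral_finsetSum _ fun i _ => measurable_one.indicator (hA i)).symm
    _ = ∫⁻ x, (#{i | x ∈ A i} : ℝ≥0∞) ∂μ := by
        simp only [Set.indicator_apply, Pi.one_apply, sum_boole]
    _ ≤ ∫⁻ _, K ∂μ := lintegral_mono_ae hK
    _ = K * μ Set.univ := lintegral_const K

lemma measure_leaveOneOutTail_le {Ω : Type*} [MeasurableSpace Ω] {μ : Measure Ω}
    [IsProbabilityMeasure μ] {n : ℕ} {Y : Fin (n + 1) → Ω → ℝ} (hY : ∀ i, Measurable (Y i))
    (hind : iIndepFun Y μ) (hident : ∀ i j, IdentDistrib (Y i) (Y j) μ μ) {lam : ℝ}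
    (hlam : 0 < lam) (j : Fin (n + 1)) :
    μ {ω | (fun i => Y i ω) ∈ leaveOneOutTail lam j}
      ≤ ENNReal.ofReal ((n + 1 + lam ^ 2) / (lam ^ 2 * n + (n + 1 + lam ^ 2))) := by
  classical
  set T : Ω → Fin (n + 1) → ℝ := fun ω i => Y i ω
  have hT : Measurable T := measurable_pi_lambda _ hY
  have hexch (k : Fin (n + 1)) :
      μ (T ⁻¹' leaveOneOutTail lam k) = μ (T ⁻¹' leaveOneOutTail lam j) := by
    have h := (hind.identDistrib_comp_perm (fun i => (hY i).aemeasurable) hident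
      (Equiv.swap j k)).measure_mem_eq (measurableSet_leaveOneOutTail lam j)
    change μ (T ⁻¹' ((fun v => v ∘ Equiv.swap j k) ⁻¹' leaveOneOutTail lam j)) = _ at h
    rw [preimage_comp_leaveOneOutTail, Equiv.swap_apply_left] at h
    exact h
  have hsum := sum_measure_le_of_card_le (μ := μ)
    (fun k => hT (measurableSet_leaveOneOutTail lam k))
    (K := ENNReal.ofReal ((n + 1) * ((n + 1 + lam ^ 2) / (lam ^ 2 * n + (n + 1 + lam ^ 2)))))
    (ae_of_all _ fun ω => by
      rw [← ENNReal.ofReal_natCast, mul_div_assoc']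
      exact ENNReal.ofReal_le_ofReal (card_leaveOneOutTail_le hlam (T ω)))
  rw [sum_congr rfl fun k _ => hexch k, sum_const, card_univ, Fintype.card_fin, nsmul_eq_mul,
    measure_univ, mul_one, ENNReal.ofReal_mul (by positivity)] at hsum
  rw [show ENNReal.ofReal (n + 1) = ((n + 1 : ℕ) : ℝ≥0∞) by norm_cast] at hsum
  exact (ENNReal.mul_le_mul_iff_right (by positivity) (ENNReal.natCast_ne_top _)).1 hsum

lemma div_add_le_div_add {a b c : ℝ} (ha : 0 < a) (hab : a ≤ b) (hc : 0 ≤ c) :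
    a / (c + a) ≤ b / (c + b) := by
  rw [div_le_div_iff₀ (by positivity) (by linarith)]
  nlinarith

theorem sample_cantelli_upper_general
    {Ω : Type*} [MeasurableSpace Ω] (μ : Measure Ω) [IsProbabilityMeasure μ]
    (Ns : ℕ)
    (X : Ω → ℝ) (Xs : Fin Ns → Ω → ℝ)
    (hXmeas : Measurable X) (hXsmeas : ∀ i, Measurable (Xs i))
    (hIndep : iIndepFun
      (Fin.cons X Xs : Fin (Ns + 1) → Ω → ℝ) μ)
    (hIdent : ∀ i : Fin (Ns + 1),
      IdentDistrib ((Fin.cons X Xs : Fin (Ns + 1) → Ω → ℝ) i) X μ μ)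
    (Xhat : Ω → ℝ) (hXhat : ∀ ω, Xhat ω = (1 / (Ns : ℝ)) * ∑ i, Xs i ω)
    (sd : Ω → ℝ)
    (hsd : ∀ ω, sd ω = Real.sqrt ((1 / (Ns : ℝ)) * ∑ i, (Xs i ω - Xhat ω) ^ 2))
    (hsd_pos : ∀ᵐ ω ∂μ, 0 < sd ω)
    (lam : ℝ) (hlam : 0 < lam) :
    μ {ω | lam * sd ω ≤ X ω - Xhat ω} ≤
      ENNReal.ofReal ((Real.sqrt ((Ns : ℝ) + 1) + lam) ^ 2 /
        (lam ^ 2 * (Ns : ℝ) + (Real.sqrt ((Ns : ℝ) + 1) + lam) ^ 2)) := by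
  set Y : Fin (Ns + 1) → Ω → ℝ := Fin.cons X Xs
  have hY : ∀ i, Measurable (Y i) := Fin.cases hXmeas hXsmeas
  have hmean (ω : Ω) : sampleMean (fun i => Xs i ω) = Xhat ω := (hXhat ω).symm
  have hstd (ω : Ω) : sampleStd (fun i => Xs i ω) = sd ω := by
    rw [hsd, ← hmean]; rfl
  have hevent : {ω | lam * sd ω ≤ X ω - Xhat ω}
      ≤ᵐ[μ] {ω | (fun i => Y i ω) ∈ leaveOneOutTail lam 0} := by
    filter_upwards [hsd_pos] with ω hpos hω
    have hrem : Fin.removeNth 0 (fun i => Y i ω) = fun i => Xs i ω := by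
      funext i; simp [Y, Fin.removeNth]
    show _ ∈ leaveOneOutTail lam 0
    simp only [leaveOneOutTail, Set.mem_ofPred_eq, hrem, hmean, hstd]
    exact ⟨hpos, hω⟩
  refine (measure_mono_ae hevent).trans ((measure_leaveOneOutTail_le hY hIndep
    (fun i j => (hIdent i).trans (hIdent j).symm) hlam 0).trans (ENNReal.ofReal_le_ofReal ?_))
  refine div_add_le_div_add (by positivity) ?_ (by positivity)
  have hsqrt : √((Ns : ℝ) + 1) ^ 2 = Ns + 1 := sq_sqrt (by positivity)
  nlinarith [sqrt_nonneg ((Ns : ℝ) + 1)]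

/-- **Sample-statistics concentration inequality (Theorem 1).**
Let `X, X₁, …, X_{Ns}` be i.i.d. real-valued random variables on a probability
space, `Ns ≥ 2`.  With `X̂` the sample mean and `σ̂` the (uncorrected) sample
standard deviation of `X₁, …, X_{Ns}`, assumed a.s. positive, for every
`λ > 0` we have
`P(X − X̂ ≥ λ σ̂) ≤ (√(Ns+1) + λ)² / (λ² Ns + (√(Ns+1) + λ)²)`. -/
theorem sample_cantelli_upper
    {Ω : Type*} [MeasurableSpace Ω] (μ : Measure Ω) [IsProbabilityMeasure μ]
    (Ns : ℕ) (hNs : 2 ≤ Ns)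
    (X : Ω → ℝ) (Xs : Fin Ns → Ω → ℝ)
    (hXmeas : Measurable X) (hXsmeas : ∀ i, Measurable (Xs i))
    (hIndep : iIndepFun
      (Fin.cons X Xs : Fin (Ns + 1) → Ω → ℝ) μ)
    (hIdent : ∀ i : Fin (Ns + 1),
      IdentDistrib ((Fin.cons X Xs : Fin (Ns + 1) → Ω → ℝ) i) X μ μ)
    (Xhat : Ω → ℝ) (hXhat : ∀ ω, Xhat ω = (1 / (Ns : ℝ)) * ∑ i, Xs i ω)
    (sd : Ω → ℝ)
    (hsd : ∀ ω, sd ω = Real.sqrt ((1 / (Ns : ℝ)) * ∑ i, (Xs i ω - Xhat ω) ^ 2))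
    (hsd_pos : ∀ᵐ ω ∂μ, 0 < sd ω)
    (lam : ℝ) (hlam : 0 < lam) :
    μ {ω | lam * sd ω ≤ X ω - Xhat ω} ≤
      ENNReal.ofReal ((Real.sqrt ((Ns : ℝ) + 1) + lam) ^ 2 /
        (lam ^ 2 * (Ns : ℝ) + (Real.sqrt ((Ns : ℝ) + 1) + lam) ^ 2)) :=
  sample_cantelli_upper_general μ Ns X Xs hXmeas hXsmeas hIndep hIdent Xhat hXhat sd hsd hsd_pos lam
    hlam
end

section
/- For every integer N_s ≥ 2, the cubic equation (2/√(N_s+1))·λ³ + 3·λ² − 1 = 0 has exactly one positive real root, and that root equals Θ(N_s) = √(N_s+1)·(cos((1/3)·arccos(−(N_s−1)/(N_s+1))) − 1/2). -/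
/-- **The unique positive root of the inflection cubic.**
For every integer `Ns ≥ 2`, the cubic `(2/√(Ns+1)) λ³ + 3 λ² − 1 = 0` has
exactly one positive real root, and that root equals
`Θ(Ns) = √(Ns+1) (cos((1/3) arccos(−(Ns−1)/(Ns+1))) − 1/2)`. -/
theorem cubic_unique_positive_root
    (Ns : ℕ) (hNs : 2 ≤ Ns)
    (Θ : ℝ)
    (hΘ : Θ = Real.sqrt ((Ns : ℝ) + 1) *
      (Real.cos ((1 / 3) * Real.arccos (-(((Ns : ℝ) - 1) / ((Ns : ℝ) + 1)))) - 1 / 2)) :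
    (0 < Θ ∧ (2 / Real.sqrt ((Ns : ℝ) + 1)) * Θ ^ 3 + 3 * Θ ^ 2 - 1 = 0) ∧
      ∀ lam : ℝ, 0 < lam →
        (2 / Real.sqrt ((Ns : ℝ) + 1)) * lam ^ 3 + 3 * lam ^ 2 - 1 = 0 →
        lam = Θ := by
  set a : ℝ := (Ns : ℝ) + 1 with ha_def
  have hNs3 : (3 : ℝ) ≤ a := by
    have : (2 : ℝ) ≤ (Ns : ℝ) := by exact_mod_cast hNs
    simp only [ha_def]; linarith
  have ha0 : (0 : ℝ) < a := by linarith
  set s : ℝ := Real.sqrt a with hs_def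
  have hs0 : 0 < s := Real.sqrt_pos.mpr ha0
  have hs2 : s ^ 2 = a := Real.sq_sqrt ha0.le
  set y : ℝ := -(((Ns : ℝ) - 1) / a) with hy_def
  have hy_eq : ((Ns : ℝ) - 1) = a - 2 := by simp only [ha_def]; ring
  have hy1 : -1 < y := by
    rw [hy_def, hy_eq, neg_lt, neg_neg, div_lt_one ha0]; linarith
  have hy2 : y ≤ 1 := by
    rw [hy_def, hy_eq]
    have : 0 ≤ (a - 2) / a := div_nonneg (by linarith) ha0.le
    linarith
  set θ : ℝ := (1 / 3) * Real.arccos y with hθ_def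
  have hcos3 : Real.cos (3 * θ) = y := by
    rw [hθ_def]
    have h3 : 3 * ((1 : ℝ) / 3 * Real.arccos y) = Real.arccos y := by ring
    rw [h3, Real.cos_arccos hy1.le hy2]
  set c : ℝ := Real.cos θ with hc_def
  have hc3 : 4 * c ^ 3 - 3 * c = y := by
    have h := Real.cos_three_mul θ
    rw [hcos3] at h; linarith [h]
  have hθ0 : 0 ≤ θ := by
    rw [hθ_def]
    have := Real.arccos_nonneg y
    linarith
  have hθlt : θ < Real.pi / 3 := by
    have harcsin := Real.neg_pi_div_two_lt_arcsin.mpr hy1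
    have h : Real.arccos y < Real.pi := by
      rw [Real.arccos]; linarith
    rw [hθ_def]; linarith
  have hc_half : 1 / 2 < c := by
    have hcc : Real.cos (Real.pi / 3) < Real.cos θ := by
      apply Real.cos_lt_cos_of_nonneg_of_le_pi hθ0 _ hθlt
      linarith [Real.pi_pos]
    rw [Real.cos_pi_div_three] at hcc
    exact hcc
  have hΘ' : Θ = s * (c - 1 / 2) := hΘ
  have hΘpos : 0 < Θ := by
    rw [hΘ']
    exact mul_pos hs0 (by linarith)
  have hy' : a * y = -(a - 2) := by
    rw [hy_def, hy_eq]
    field_simp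
  have key : 2 * a * (c - 1 / 2) ^ 3 + 3 * a * (c - 1 / 2) ^ 2 - 1 = 0 := by
    linear_combination (a / 2) * hc3 + (1 / 2) * hy'
  have e1 : (2 / s) * (s * (c - 1 / 2)) ^ 3 = 2 * a * (c - 1 / 2) ^ 3 := by
    rw [← hs2]; field_simp
  have e2 : 3 * (s * (c - 1 / 2)) ^ 2 = 3 * a * (c - 1 / 2) ^ 2 := by
    rw [← hs2]; ring
  have hroot : (2 / s) * Θ ^ 3 + 3 * Θ ^ 2 - 1 = 0 := by
    rw [hΘ', e1, e2]; linarith [key]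
  refine ⟨⟨hΘpos, hroot⟩, ?_⟩
  intro lam hlam hl
  have hfac : (lam - Θ) * ((2 / s) * (lam ^ 2 + lam * Θ + Θ ^ 2) + 3 * (lam + Θ)) = 0 := by
    linear_combination hl - hroot
  have h2s : 0 < 2 / s := by positivity
  have hq : 0 < lam ^ 2 + lam * Θ + Θ ^ 2 := by nlinarith [mul_pos hlam hΘpos]
  have hpos : 0 < (2 / s) * (lam ^ 2 + lam * Θ + Θ ^ 2) + 3 * (lam + Θ) := by
    have := mul_pos h2s hq
    linarith
  rcases mul_eq_zero.mp hfac with h | h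
  · linarith
  · linarith
end

section
/- For every integer N_s ≥ 2, the function f(λ) = (√(N_s+1) + λ)² / (λ²·N_s + (√(N_s+1) + λ)²) is convex on the interval [Θ(N_s), ∞), where Θ(N_s) = √(N_s+1)·(cos((1/3)·arccos(−(N_s−1)/(N_s+1))) − 1/2). -/
/-! With `s = √(n+1)` (so `s² = n+1`) and `v(λ) = λ²n + (s+λ)²`, a direct computation gives
`f'' = 2ns³ (2λ³ + 3sλ² − s) / v³`, so `f` is convex wherever the cubic `2λ³ + 3sλ² − s` is
nonnegative; this cubic increases on `[0, ∞)`. Substituting `λ = s (c − 1/2)` turns it into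
`(s/2) ((n+1)(4c³ − 3c) + (n − 1))`, whose root `c = cos(arccos(−(n−1)/(n+1)) / 3)` comes
from the triple-angle formula; hence `Θ` is the nonnegative root of the cubic. -/

open Real Set

namespace Real

lemma four_mul_cos_arccos_div_three_pow_three_sub {y : ℝ} (hy₁ : -1 ≤ y) (hy₂ : y ≤ 1) :
    4 * cos (arccos y / 3) ^ 3 - 3 * cos (arccos y / 3) = y := by
  rw [← cos_three_mul, mul_div_cancel₀ _ three_ne_zero, cos_arccos hy₁ hy₂]

lemma one_half_le_cos_arccos_div_three (y : ℝ) : 1 / 2 ≤ cos (arccos y / 3) := by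
  rw [← cos_pi_div_three]
  apply cos_le_cos_of_nonneg_of_le_pi (by linarith [arccos_nonneg y]) (by linarith [pi_pos])
  linarith [arccos_le_pi y]

end Real

section Bound

variable {n s x : ℝ}

lemma hasDerivAt_bound (hv : x ^ 2 * n + (s + x) ^ 2 ≠ 0) :
    HasDerivAt (fun l : ℝ => (s + l) ^ 2 / (l ^ 2 * n + (s + l) ^ 2))
      (-(2 * n * s) * (x * (s + x)) / (x ^ 2 * n + (s + x) ^ 2) ^ 2) x := by
  have hu : HasDerivAt (fun l : ℝ => (s + l) ^ 2) (2 * (s + x)) x := by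
    simpa using ((hasDerivAt_id x).const_add s).fun_pow 2
  have hw : HasDerivAt (fun l : ℝ => l ^ 2 * n) (2 * x * n) x := by
    simpa using (hasDerivAt_pow 2 x).mul_const n
  refine (hu.fun_div (hw.fun_add hu) hv).congr_deriv ?_
  field_simp
  ring

lemma hasDerivAt_deriv_bound (hv : x ^ 2 * n + (s + x) ^ 2 ≠ 0) :
    HasDerivAt (fun l : ℝ => -(2 * n * s) * (l * (s + l)) / (l ^ 2 * n + (s + l) ^ 2) ^ 2)
      (2 * n * s * ((n + 1) * (2 * x ^ 3 + 3 * s * x ^ 2) - s ^ 3) /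
        (x ^ 2 * n + (s + x) ^ 2) ^ 3) x := by
  have hu : HasDerivAt (fun l : ℝ => -(2 * n * s) * (l * (s + l)))
      (-(2 * n * s) * (s + 2 * x)) x := by
    have := ((hasDerivAt_id x).fun_mul ((hasDerivAt_id x).const_add s)).const_mul (-(2 * n * s))
    simp only [id_eq] at this
    exact this.congr_deriv (by ring)
  have hv' : HasDerivAt (fun l : ℝ => (l ^ 2 * n + (s + l) ^ 2) ^ 2)
      (2 * (x ^ 2 * n + (s + x) ^ 2) * (2 * x * n + 2 * (s + x))) x := by
    have hw : HasDerivAt (fun l : ℝ => l ^ 2 * n + (s + l) ^ 2) (2 * x * n + 2 * (s + x)) x := by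
      simpa using ((hasDerivAt_pow 2 x).mul_const n).fun_add
        (((hasDerivAt_id x).const_add s).fun_pow 2)
    simpa [mul_comm, mul_assoc, mul_left_comm] using hw.fun_pow 2
  refine (hu.fun_div hv' (pow_ne_zero 2 hv)).congr_deriv ?_
  field_simp
  ring

lemma monotoneOn_inflection_cubic (hs : 0 ≤ s) :
    MonotoneOn (fun x : ℝ => 2 * x ^ 3 + 3 * s * x ^ 2 - s) (Ici 0) := by
  intro a ha x hx hax
  simp only [mem_Ici] at ha hx
  beta_reduce
  nlinarith [mul_nonneg (sub_nonneg.2 hax) (add_nonneg (mul_nonneg ha hx) (sq_nonneg (x + a))),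
    mul_nonneg hs (mul_nonneg (sub_nonneg.2 hax) (add_nonneg hx ha))]

lemma convexOn_Ici_bound {Θ : ℝ} (hn : 0 < n) (hs : 0 ≤ s) (hs2 : s ^ 2 = n + 1) (hΘ : 0 ≤ Θ)
    (hcubic : 0 ≤ 2 * Θ ^ 3 + 3 * s * Θ ^ 2 - s) :
    ConvexOn ℝ (Ici Θ) (fun l : ℝ => (s + l) ^ 2 / (l ^ 2 * n + (s + l) ^ 2)) := by
  have hv : ∀ x : ℝ, 0 < x ^ 2 * n + (s + x) ^ 2 := fun x => by
    rcases eq_or_ne x 0 with rfl | hx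
    · nlinarith
    · have := sq_pos_of_ne_zero hx
      positivity
  refine convexOn_of_hasDerivWithinAt2_nonneg (convex_Ici Θ)
    (fun x _ => (hasDerivAt_bound (hv x).ne').continuousAt.continuousWithinAt)
    (fun x _ => (hasDerivAt_bound (hv x).ne').hasDerivWithinAt)
    (fun x _ => (hasDerivAt_deriv_bound (hv x).ne').hasDerivWithinAt) ?_
  rintro x hx
  rw [interior_Ici, mem_Ioi] at hx
  have hp := hcubic.trans (monotoneOn_inflection_cubic hs hΘ (hΘ.trans hx.le) hx.le)
  have hnum : (n + 1) * (2 * x ^ 3 + 3 * s * x ^ 2) - s ^ 3 =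
      s ^ 2 * (2 * x ^ 3 + 3 * s * x ^ 2 - s) := by
    rw [← hs2]; ring
  rw [hnum]
  have := hv x
  positivity

end Bound

/-- **Convexity of the concentration bound beyond the inflection point.**
For every integer `Ns ≥ 2`, the function
`f(λ) = (√(Ns+1) + λ)² / (λ² Ns + (√(Ns+1) + λ)²)` is convex on
`[Θ(Ns), ∞)`, where
`Θ(Ns) = √(Ns+1) (cos((1/3) arccos(−(Ns−1)/(Ns+1))) − 1/2)`. -/
theorem bound_convexOn_Ici_theta
    (Ns : ℕ) (hNs : 2 ≤ Ns)
    (Θ : ℝ)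
    (hΘ : Θ = Real.sqrt ((Ns : ℝ) + 1) *
      (Real.cos ((1 / 3) * Real.arccos (-(((Ns : ℝ) - 1) / ((Ns : ℝ) + 1)))) - 1 / 2)) :
    ConvexOn ℝ (Set.Ici Θ)
      (fun lam : ℝ => (Real.sqrt ((Ns : ℝ) + 1) + lam) ^ 2 /
        (lam ^ 2 * (Ns : ℝ) + (Real.sqrt ((Ns : ℝ) + 1) + lam) ^ 2)) := by
  set n : ℝ := (Ns : ℝ)
  have hn : 0 < n := Nat.cast_pos.2 (by omega)
  have hs2 : √(n + 1) ^ 2 = n + 1 := sq_sqrt (by positivity)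
  set y := -((n - 1) / (n + 1))
  have hy₁ : -1 ≤ y := by
    rw [neg_le_neg_iff, div_le_one (by positivity)]; linarith
  have hy₂ : y ≤ 1 := by
    rw [neg_le, le_div_iff₀ (by positivity)]; linarith
  have hy : (n + 1) * y = -(n - 1) := by simp only [y]; field_simp
  clear_value y
  rw [one_div_mul_eq_div] at hΘ
  have hc := four_mul_cos_arccos_div_three_pow_three_sub hy₁ hy₂
  have hc_half := one_half_le_cos_arccos_div_three y
  set c := cos (arccos y / 3)
  have hΘ₀ : 0 ≤ Θ := hΘ ▸ mul_nonneg (sqrt_nonneg _) (sub_nonneg.2 hc_half)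
  refine convexOn_Ici_bound hn (sqrt_nonneg _) hs2 hΘ₀ (ge_of_eq ?_)
  rw [hΘ]
  linear_combination √(n + 1) * (2 * c ^ 3 - 3 / 2 * c + 1 / 2) * hs2
    + √(n + 1) / 2 * ((n + 1) * hc + hy)
end

section
/- For every integer N_s ≥ 2, Θ(N_s) = √(N_s+1)·(cos((1/3)·arccos(−(N_s−1)/(N_s+1))) − 1/2) satisfies Θ(N_s) ≤ 1/√3. -/
/-- **Uniform upper bound on the inflection point.**
For every integer `Ns ≥ 2`,
`Θ(Ns) = √(Ns+1) (cos((1/3) arccos(−(Ns−1)/(Ns+1))) − 1/2) ≤ 1/√3`. -/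
theorem theta_le_inv_sqrt_three
    (Ns : ℕ) (hNs : 2 ≤ Ns) :
    Real.sqrt ((Ns : ℝ) + 1) *
        (Real.cos ((1 / 3) * Real.arccos (-(((Ns : ℝ) - 1) / ((Ns : ℝ) + 1)))) - 1 / 2) ≤
      1 / Real.sqrt 3 := by
  set N : ℝ := (Ns : ℝ) with hN
  have hN2 : (2 : ℝ) ≤ N := by rw [hN]; exact_mod_cast hNs
  have hN1 : (0 : ℝ) < N + 1 := by linarith
  set x : ℝ := (N - 1) / (N + 1) with hxdef
  have hx0 : 0 ≤ x := div_nonneg (by linarith) (by linarith)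
  have hx1 : x ≤ 1 := by
    rw [hxdef, div_le_one hN1]; linarith
  have hm1 : (-1 : ℝ) ≤ -x := by linarith
  have hm2 : -x ≤ 1 := by linarith
  set a : ℝ := Real.arccos (-x) with hadef
  have ha0 : 0 ≤ a := Real.arccos_nonneg _
  have hapi : a ≤ Real.pi := Real.arccos_le_pi _
  set c : ℝ := Real.cos ((1 / 3) * a) with hcdef
  have hc1 : c ≤ 1 := Real.cos_le_one _
  have hchalf : 1 / 2 ≤ c := by
    have := Real.cos_le_cos_of_nonneg_of_le_pi
      (x := (1 / 3) * a) (y := Real.pi / 3)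
      (by positivity) (by linarith [Real.pi_pos]) (by linarith)
    rwa [Real.cos_pi_div_three] at this
  have htriple : 4 * c ^ 3 - 3 * c = -x := by
    have h3 : 3 * ((1 / 3) * a) = a := by ring
    have := Real.cos_three_mul ((1 / 3) * a)
    rw [h3, hadef, Real.cos_arccos hm1 hm2] at this
    linarith [this]
  have key : (N + 1) * (4 * c ^ 3 - 3 * c) = -(N - 1) := by
    rw [htriple, hxdef]
    field_simp
  -- hence (N+1) * (2c-1)^2 * (c+1) = 2, so (N+1)*(c-1/2)^2 ≤ 1/3
  have hsq : (N + 1) * (c - 1 / 2) ^ 2 ≤ 1 / 3 := by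
    nlinarith [key, sq_nonneg (c - 1 / 2), sq_nonneg (2 * c - 1)]
  have hs : Real.sqrt (N + 1) ^ 2 = N + 1 := Real.sq_sqrt hN1.le
  have ht : Real.sqrt 3 ^ 2 = 3 := Real.sq_sqrt (by norm_num)
  have hspos : 0 ≤ Real.sqrt (N + 1) := Real.sqrt_nonneg _
  have htpos : 0 < Real.sqrt 3 := Real.sqrt_pos.mpr (by norm_num)
  rw [le_div_iff₀ htpos]
  have hu3 : (Real.sqrt (N + 1) * (c - 1 / 2) * Real.sqrt 3) ^ 2 ≤ 1 := by
    rw [mul_pow, mul_pow, hs, ht]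
    nlinarith [hsq]
  have hu0 : 0 ≤ Real.sqrt (N + 1) * (c - 1 / 2) * Real.sqrt 3 :=
    mul_nonneg (mul_nonneg hspos (by linarith)) htpos.le
  nlinarith [hu3, hu0, sq_nonneg (Real.sqrt (N + 1) * (c - 1 / 2) * Real.sqrt 3 - 1)]
end

section
/- Let z^{[1]}, ..., z^{[N]} ∈ ℝ^q with N ≥ 1, let ẑ = (1/N)·Σ_i z^{[i]}, m = (1/N)·Σ_i ‖z^{[i]}‖², sample covariance matrix Σ̂ = (1/N)·Σ_i (z^{[i]} − ẑ)(z^{[i]} − ẑ)ᵀ, sample covariance vector ĉ = (1/N)·Σ_i (z^{[i]} − ẑ)·(‖z^{[i]}‖² − m), and sample variance v̂ = (1/N)·Σ_i (‖z^{[i]}‖² − m)². Then for every z ∈ ℝ^q, writing μ(z) = (1/N)·Σ_i ‖z + z^{[i]}‖², one has (1/N)·Σ_{i=1}^{N} (‖z + z^{[i]}‖² − μ(z))² = 4·zᵀ·Σ̂·z + 4·⟨ĉ, z⟩ + v̂ = (z,1)ᵀ·[[4Σ̂, 2ĉ],[2ĉᵀ, v̂]]·(z,1). -/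
/-!
Expanding `‖z + zᵢ‖² = ‖z‖² + 2⟪z, zᵢ⟫ + ‖zᵢ‖²` and averaging, the term `‖z‖²` cancels from the
deviation, which becomes `‖z + zᵢ‖² - μ(z) = 2⟪z, zᵢ - ẑ⟫ + (‖zᵢ‖² - m)`. Squaring and averaging
gives `4 · avg ⟪z, zᵢ - ẑ⟫² + 4 · avg ⟪z, zᵢ - ẑ⟫ (‖zᵢ‖² - m) + v̂`, and the first two averages
are `zᵀ Σ̂ z` and `⟨ĉ, z⟩`. The block form is the same quadratic polynomial evaluated at `(z, 1)`.
-/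

open Matrix

open RealInnerProductSpace in
theorem norm_add_sq_sub_mean {ι E : Type*} [Fintype ι] [NormedAddCommGroup E]
    [InnerProductSpace ℝ E] (x : ι → E) (z : E) (i : ι) :
    ‖z + x i‖ ^ 2 - (Fintype.card ι : ℝ)⁻¹ * ∑ k, ‖z + x k‖ ^ 2 =
      2 * ⟪z, x i - (Fintype.card ι : ℝ)⁻¹ • ∑ k, x k⟫ +
        (‖x i‖ ^ 2 - (Fintype.card ι : ℝ)⁻¹ * ∑ k, ‖x k‖ ^ 2) := by
  have hcard : (Fintype.card ι : ℝ) ≠ 0 := by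
    exact_mod_cast (Fintype.card_pos_iff.mpr ⟨i⟩).ne'
  have hsum : ∑ k, ‖z + x k‖ ^ 2 =
      Fintype.card ι * ‖z‖ ^ 2 + 2 * ⟪z, ∑ k, x k⟫ + ∑ k, ‖x k‖ ^ 2 := by
    simp only [norm_add_sq_real, Finset.sum_add_distrib, ← Finset.mul_sum, inner_sum,
      Finset.sum_const, Finset.card_univ, nsmul_eq_mul]
  rw [hsum, norm_add_sq_real, inner_sub_right, inner_smul_right]
  field_simp
  ring

namespace Matrix

theorem dotProduct_mulVec_of_mul_sum_mul {ι n R : Type*} [Fintype ι] [Fintype n]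
    [CommSemiring R] (c : R) (u v : ι → n → R) (x y : n → R) :
    x ⬝ᵥ (of fun j k => c * ∑ i, u i j * v i k) *ᵥ y = c * ∑ i, (x ⬝ᵥ u i) * (v i ⬝ᵥ y) := by
  simp only [dotProduct, mulVec, of_apply, Finset.mul_sum, Finset.sum_mul]
  refine (Finset.sum_congr rfl fun j _ => Finset.sum_comm).trans ?_
  rw [Finset.sum_comm]
  refine Finset.sum_congr rfl fun i _ => ?_
  rw [Finset.sum_comm]
  exact Finset.sum_congr rfl fun k _ => Finset.sum_congr rfl fun j _ => by ring

theorem mul_sum_mul_dotProduct {ι n R : Type*} [Fintype ι] [Fintype n]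
    [CommSemiring R] (c : R) (u : ι → n → R) (b : ι → R) (y : n → R) :
    (fun j => c * ∑ i, u i j * b i) ⬝ᵥ y = c * ∑ i, (u i ⬝ᵥ y) * b i := by
  simp only [dotProduct, Finset.mul_sum, Finset.sum_mul]
  rw [Finset.sum_comm]
  exact Finset.sum_congr rfl fun i _ => Finset.sum_congr rfl fun j _ => by ring

theorem sumElim_dotProduct_fromBlocks_mulVec_sumElim_one {n R : Type*} [Fintype n] [Semiring R]
    (x : n → R) (A : Matrix n n R) (b c : n → R) (d : R) :
    Sum.elim x (fun _ : Unit => 1) ⬝ᵥ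
        fromBlocks A (of fun j (_ : Unit) => b j) (of fun (_ : Unit) j => c j)
          (of fun _ _ => d) *ᵥ Sum.elim x (fun _ : Unit => 1) =
      x ⬝ᵥ A *ᵥ x + x ⬝ᵥ b + c ⬝ᵥ x + d := by
  rw [fromBlocks_mulVec, sumElim_dotProduct_sumElim]
  simp [mulVec, dotProduct, Finset.mul_sum, mul_add, Finset.sum_add_distrib, add_assoc]
end Matrix

theorem variance_norm_sq_quadratic_form_general
    (q N : ℕ)
    (zs : Fin N → EuclideanSpace ℝ (Fin q))
    (zhat : EuclideanSpace ℝ (Fin q))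
    (hzhat : zhat = (1 / (N : ℝ)) • ∑ i, zs i)
    (m : ℝ) (hm : m = (1 / (N : ℝ)) * ∑ i, ‖zs i‖ ^ 2)
    (Sighat : Matrix (Fin q) (Fin q) ℝ)
    (hSighat : Sighat = Matrix.of fun j k =>
      (1 / (N : ℝ)) * ∑ i, (zs i j - zhat j) * (zs i k - zhat k))
    (chat : Fin q → ℝ)
    (hchat : chat = fun j =>
      (1 / (N : ℝ)) * ∑ i, (zs i j - zhat j) * (‖zs i‖ ^ 2 - m))
    (vhat : ℝ)
    (hvhat : vhat = (1 / (N : ℝ)) * ∑ i, (‖zs i‖ ^ 2 - m) ^ 2)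
    (μ : EuclideanSpace ℝ (Fin q) → ℝ)
    (hμ : ∀ z, μ z = (1 / (N : ℝ)) * ∑ i, ‖z + zs i‖ ^ 2)
    (M : Matrix (Fin q ⊕ Unit) (Fin q ⊕ Unit) ℝ)
    (hM : M = Matrix.fromBlocks
      (4 • Sighat)
      (Matrix.of fun j (_ : Unit) => 2 * chat j)
      (Matrix.of fun (_ : Unit) j => 2 * chat j)
      (Matrix.of fun (_ : Unit) (_ : Unit) => vhat)) :
    ∀ z : EuclideanSpace ℝ (Fin q),
      ((1 / (N : ℝ)) * ∑ i, (‖z + zs i‖ ^ 2 - μ z) ^ 2 =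
          4 * ((fun j => z j) ⬝ᵥ Sighat.mulVec fun j => z j) +
            4 * (chat ⬝ᵥ fun j => z j) + vhat) ∧
        (1 / (N : ℝ)) * ∑ i, (‖z + zs i‖ ^ 2 - μ z) ^ 2 =
          (Sum.elim (fun j => z j) (fun _ : Unit => (1 : ℝ))) ⬝ᵥ
            M.mulVec (Sum.elim (fun j => z j) (fun _ : Unit => (1 : ℝ))) := by
  intro z
  have hdev (i : Fin N) : ‖z + zs i‖ ^ 2 - μ z =
      2 * ((fun j => zs i j - zhat j) ⬝ᵥ fun j => z j) + (‖zs i‖ ^ 2 - m) := by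
    have h := norm_add_sq_sub_mean zs z i
    rw [Fintype.card_fin, ← one_div, ← hm, ← hzhat] at h
    rw [hμ, h, EuclideanSpace.inner_eq_star_dotProduct]
    rfl
  have hvar : (1 / (N : ℝ)) * ∑ i, (‖z + zs i‖ ^ 2 - μ z) ^ 2 =
      4 * ((fun j => z j) ⬝ᵥ Sighat.mulVec fun j => z j) +
        4 * (chat ⬝ᵥ fun j => z j) + vhat := by
    rw [hSighat, hchat, hvhat, dotProduct_mulVec_of_mul_sum_mul, mul_sum_mul_dotProduct]
    simp only [hdev, Finset.mul_sum, ← Finset.sum_add_distrib]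
    refine Finset.sum_congr rfl fun i _ => ?_
    rw [dotProduct_comm (fun j => z j)]
    ring
  refine ⟨hvar, ?_⟩
  rw [hvar, hM, sumElim_dotProduct_fromBlocks_mulVec_sumElim_one, smul_mulVec, dotProduct_smul,
    show (fun j => 2 * chat j) = (2 : ℝ) • chat from rfl, dotProduct_smul, smul_dotProduct,
    dotProduct_comm _ chat, nsmul_eq_mul, smul_eq_mul]
  push_cast
  ring

/-- **Quadratic-form representation of the sample variance of squared norms.**
Let `z⁽¹⁾, …, z⁽ᴺ⁾ ∈ ℝ^q` with `N ≥ 1`, `ẑ` their sample mean, `m` the sample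
mean of their squared Euclidean norms, `Σ̂` the sample covariance matrix,
`ĉ` the sample covariance vector between `z` and `‖z‖²`, and `v̂` the sample
variance of `‖z‖²`.  Then for every `z ∈ ℝ^q`, writing
`μ(z) = (1/N) ∑ᵢ ‖z + z⁽ⁱ⁾‖²`,
`(1/N) ∑ᵢ (‖z + z⁽ⁱ⁾‖² − μ(z))² = 4 zᵀ Σ̂ z + 4 ⟨ĉ, z⟩ + v̂
  = (z,1)ᵀ [[4Σ̂, 2ĉ],[2ĉᵀ, v̂]] (z,1)`. -/
theorem variance_norm_sq_quadratic_form
    (q N : ℕ) (hN : 1 ≤ N)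
    (zs : Fin N → EuclideanSpace ℝ (Fin q))
    (zhat : EuclideanSpace ℝ (Fin q))
    (hzhat : zhat = (1 / (N : ℝ)) • ∑ i, zs i)
    (m : ℝ) (hm : m = (1 / (N : ℝ)) * ∑ i, ‖zs i‖ ^ 2)
    (Sighat : Matrix (Fin q) (Fin q) ℝ)
    (hSighat : Sighat = Matrix.of fun j k =>
      (1 / (N : ℝ)) * ∑ i, (zs i j - zhat j) * (zs i k - zhat k))
    (chat : Fin q → ℝ)
    (hchat : chat = fun j =>
      (1 / (N : ℝ)) * ∑ i, (zs i j - zhat j) * (‖zs i‖ ^ 2 - m))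
    (vhat : ℝ)
    (hvhat : vhat = (1 / (N : ℝ)) * ∑ i, (‖zs i‖ ^ 2 - m) ^ 2)
    (μ : EuclideanSpace ℝ (Fin q) → ℝ)
    (hμ : ∀ z, μ z = (1 / (N : ℝ)) * ∑ i, ‖z + zs i‖ ^ 2)
    (M : Matrix (Fin q ⊕ Unit) (Fin q ⊕ Unit) ℝ)
    (hM : M = Matrix.fromBlocks
      (4 • Sighat)
      (Matrix.of fun j (_ : Unit) => 2 * chat j)
      (Matrix.of fun (_ : Unit) j => 2 * chat j)
      (Matrix.of fun (_ : Unit) (_ : Unit) => vhat)) :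
    ∀ z : EuclideanSpace ℝ (Fin q),
      ((1 / (N : ℝ)) * ∑ i, (‖z + zs i‖ ^ 2 - μ z) ^ 2 =
          4 * ((fun j => z j) ⬝ᵥ Sighat.mulVec fun j => z j) +
            4 * (chat ⬝ᵥ fun j => z j) + vhat) ∧
        (1 / (N : ℝ)) * ∑ i, (‖z + zs i‖ ^ 2 - μ z) ^ 2 =
          (Sum.elim (fun j => z j) (fun _ : Unit => (1 : ℝ))) ⬝ᵥ
            M.mulVec (Sum.elim (fun j => z j) (fun _ : Unit => (1 : ℝ))) :=
  variance_norm_sq_quadratic_form_general q N zs zhat hzhat m hm Sighat hSighat chat hchat vhat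
    hvhat μ hμ M hM
end
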